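/- arXiv:1906.05988 — 2 statements merged into one kernel-verified Lean document; each statement's English description precedes it below -/
import Mathlib

section
/- Let g : (ℝ^{S×Z})^S → ℝ be convex and continuous, and let a ∈ A. Then inf_{μ̃ ∈ D̃_a} ∫ g(p) dμ̃(p,u) = min { g(p) : p ∈ ∏_{s∈S} B_{as} }, where the minimum on the right is attained; moreover the infimum on the left is attained by the point mass at ((p*_s, c_{as}))_{s∈S} for any minimizer p* = (p*_s)_{s∈S}. That is, for convex objectives the worst-case distribution in the mean-absolute-deviation ambiguity set may be taken to be a point mass supported in the box-constrained simplex. -/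
open MeasureTheory

section Defs

variable {S Z A : Type*}

/-- Observation weight `n_z(b,p) = Σ_s Σ_{s'} p_s(s',z) b_s`. -/
def obsW [Fintype S] (b : S → ℝ) (p : S → (S × Z) → ℝ) (z : Z) : ℝ :=
  ∑ s, ∑ s', p s (s', z) * b s

/-- Bayesian belief update `f(b,p,z)`. -/
noncomputable def bUpd [Fintype S] (b : S → ℝ) (p : S → (S × Z) → ℝ) (z : Z) : S → ℝ :=
  fun s' => (∑ s, p s (s', z) * b s) / obsW b p z

/-- The support set `X̃_{as}`. -/
def XasSet [Fintype S] [Fintype Z] (pbar : (S × Z) → ℝ) :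
    Set (((S × Z) → ℝ) × ((S × Z) → ℝ)) :=
  {x | (∀ i, x.1 i - pbar i ≤ x.2 i) ∧ (∀ i, pbar i - x.1 i ≤ x.2 i) ∧
       x.1 ∈ stdSimplex ℝ (S × Z)}

/-- The box uncertainty set `B_{as}`. -/
def BasSet [Fintype S] [Fintype Z] (pbar c : (S × Z) → ℝ) : Set ((S × Z) → ℝ) :=
  {p | p ∈ stdSimplex ℝ (S × Z) ∧ ∀ i, |p i - pbar i| ≤ c i}

/-- The ambiguity set `D̃_{as}`. -/
def DasSet [Fintype S] [Fintype Z] (pbar c : (S × Z) → ℝ) :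
    Set (Measure (((S × Z) → ℝ) × ((S × Z) → ℝ))) :=
  {μ | IsProbabilityMeasure μ ∧ μ (XasSet pbar) = 1 ∧
       Integrable (fun x => x.2) μ ∧ (∫ x, x.2 ∂μ) = c}

/-- The product ambiguity set `D̃_a = ⊗_s D̃_{as}`. -/
def DaSet [Fintype S] [Fintype Z] (pbar c : S → (S × Z) → ℝ) :
    Set (Measure (S → ((S × Z) → ℝ) × ((S × Z) → ℝ))) :=
  {μ | ∃ ν : S → Measure (((S × Z) → ℝ) × ((S × Z) → ℝ)),
    (∀ s, ν s ∈ DasSet (pbar s) (c s)) ∧ μ = Measure.pi ν}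

/-- The term `n_z(b,p) V(f(b,p,z))`, with the convention that it is `0` when `n_z(b,p) = 0`. -/
noncomputable def bTerm [Fintype S] (V : (S → ℝ) → ℝ) (b : S → ℝ)
    (p : S → (S × Z) → ℝ) (z : Z) : ℝ :=
  if obsW b p z = 0 then 0 else obsW b p z * V (bUpd b p z)

/-- `U_V(b,a,μ̃)`. -/
noncomputable def UVal [Fintype S] [Fintype Z] (r : A → S → ℝ) (β : ℝ)
    (V : (S → ℝ) → ℝ) (b : S → ℝ) (a : A)
    (μ : Measure (S → ((S × Z) → ℝ) × ((S × Z) → ℝ))) : ℝ :=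
  ∫ x, ((∑ s, b s * r a s) + β * ∑ z, bTerm V b (fun s => (x s).1) z) ∂μ

/-- The distributionally robust Bellman operator `L`. -/
noncomputable def Lop [Fintype S] [Fintype Z] [Fintype A]
    (pbar c : A → S → (S × Z) → ℝ) (r : A → S → ℝ) (β : ℝ)
    (V : (S → ℝ) → ℝ) (b : S → ℝ) : ℝ :=
  ⨆ a : A, sInf ((fun μ => UVal r β V b a μ) '' DaSet (pbar a) (c a))

end Defs

/-! For `μ̃ = ⊗_s ν_s ∈ D̃_a`, the mean of `(p, u)` under `ν_s` lies in the closed convex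
set `X̃_{as}` and has `u`-part `c_{as}`, so the mean `q_s` of `p` lies in `B_{as}`. Jensen's
inequality gives `g q ≤ ∫ g(p) dμ̃`, and `g q` is at least the minimum of `g` over `∏_s B_{as}`,
which the point mass at `((p*_s, c_{as}))_s` attains. -/

open MeasureTheory Set Filter

theorem MeasureTheory.Measure.pi_dirac {ι : Type*} [Fintype ι] {α : ι → Type*}
    [∀ i, MeasurableSpace (α i)] (x : ∀ i, α i) :
    Measure.pi (fun i => Measure.dirac (x i)) = Measure.dirac x := by
  classical
  refine Measure.pi_eq fun s hs => ?_
  rw [Measure.dirac_apply' _ (MeasurableSet.univ_pi hs), indicator_apply]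
  split_ifs with h
  · refine (Finset.prod_eq_one fun i _ => ?_).symm
    rw [Measure.dirac_apply' _ (hs i), indicator_of_mem (h i (mem_univ i))]
    rfl
  · obtain ⟨i, hi⟩ : ∃ i, x i ∉ s i := by simpa [Set.mem_pi] using h
    refine (Finset.prod_eq_zero (Finset.mem_univ i) ?_).symm
    rw [Measure.dirac_apply' _ (hs i), indicator_of_notMem hi]

theorem MeasureTheory.Integrable.of_ae_mem_of_isBounded {α E : Type*} [MeasurableSpace α]
    {μ : Measure α} [IsFiniteMeasure μ] [NormedAddCommGroup E] {f : α → E} {s : Set E}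
    (hs : Bornology.IsBounded s) (hf : AEStronglyMeasurable f μ) (hfs : ∀ᵐ x ∂μ, f x ∈ s) :
    Integrable f μ :=
  let ⟨C, hC⟩ := hs.exists_norm_le
  .of_bound hf C (hfs.mono fun _ hx => hC _ hx)

theorem MeasureTheory.integral_pi_comp_eval {ι : Type*} [Fintype ι] {X : ι → Type*}
    [∀ i, MeasurableSpace (X i)] {μ : ∀ i, Measure (X i)} [∀ i, IsProbabilityMeasure (μ i)]
    {E : ι → Type*} [∀ i, NormedAddCommGroup (E i)] [∀ i, NormedSpace ℝ (E i)]
    [∀ i, CompleteSpace (E i)] {f : ∀ i, X i → E i} (hf : ∀ i, Integrable (f i) (μ i)) :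
    ∫ x, (fun i => f i (x i)) ∂Measure.pi μ = fun i => ∫ y, f i y ∂μ i := by
  funext i
  rw [eval_integral (fun j => integrable_comp_eval (hf j)) i,
    integral_comp_eval (hf i).aestronglyMeasurable]

section AmbiguitySet

variable {S Z : Type*} [Fintype S] [Fintype Z] {pbar c : (S × Z) → ℝ}

theorem mk_mem_XasSet_iff {p u : (S × Z) → ℝ} :
    (p, u) ∈ XasSet pbar ↔ p ∈ BasSet pbar u := by
  simp only [XasSet, BasSet, mem_ofPred_eq, abs_le]
  constructor
  · rintro ⟨hle, hge, hp⟩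
    exact ⟨hp, fun i => ⟨by linarith [hge i], hle i⟩⟩
  · rintro ⟨hp, h⟩
    exact ⟨fun i => (h i).2, fun i => by linarith [(h i).1], hp⟩

theorem convex_XasSet (pbar : (S × Z) → ℝ) : Convex ℝ (XasSet pbar) := by
  rintro x ⟨hle, hge, hx⟩ y ⟨hle', hge', hy⟩ a b ha hb hab
  refine ⟨fun i => ?_, fun i => ?_, convex_stdSimplex ℝ _ hx hy ha hb hab⟩ <;>
  · simp only [Prod.fst_add, Prod.snd_add, Prod.smul_fst, Prod.smul_snd, Pi.add_apply,
      Pi.smul_apply, smul_eq_mul]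
    have : pbar i = a * pbar i + b * pbar i := by rw [← add_mul, hab, one_mul]
    linarith [mul_le_mul_of_nonneg_left (hle i) ha, mul_le_mul_of_nonneg_left (hle' i) hb,
      mul_le_mul_of_nonneg_left (hge i) ha, mul_le_mul_of_nonneg_left (hge' i) hb]

theorem isClosed_XasSet (pbar : (S × Z) → ℝ) : IsClosed (XasSet pbar) := by
  simp only [XasSet, ofPred_and, ofPred_forall]
  exact (isClosed_iInter fun i => isClosed_le (by fun_prop) (by fun_prop)).inter
    ((isClosed_iInter fun i => isClosed_le (by fun_prop) (by fun_prop)).inter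
      ((isClosed_stdSimplex ℝ _).preimage continuous_fst))

theorem isCompact_BasSet (pbar c : (S × Z) → ℝ) : IsCompact (BasSet pbar c) := by
  refine (isCompact_stdSimplex ℝ _).of_isClosed_subset ?_ fun p hp => hp.1
  simp only [BasSet, ofPred_and, ofPred_forall]
  exact (isClosed_stdSimplex ℝ _).inter
    (isClosed_iInter fun i => isClosed_le (by fun_prop) (by fun_prop))

theorem dirac_mem_DasSet {p : (S × Z) → ℝ} (hp : p ∈ BasSet pbar c) :
    Measure.dirac (p, c) ∈ DasSet pbar c := by
  refine ⟨inferInstance, ?_, integrable_dirac (by simp), integral_dirac' _ _ (by fun_prop)⟩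
  rw [Measure.dirac_apply' _ (isClosed_XasSet pbar).measurableSet,
    indicator_of_mem (mk_mem_XasSet_iff.2 hp)]
  rfl

variable {ν : Measure (((S × Z) → ℝ) × ((S × Z) → ℝ))}

theorem ae_mem_XasSet (hν : ν ∈ DasSet pbar c) : ∀ᵐ x ∂ν, x ∈ XasSet pbar := by
  have := hν.1
  exact (ae_mem_iff_measure_eq (isClosed_XasSet pbar).nullMeasurableSet).2
    (by rw [hν.2.1, measure_univ])

theorem integrable_fst_of_mem_DasSet (hν : ν ∈ DasSet pbar c) :
    Integrable (fun x => x.1) ν := by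
  have := hν.1
  exact .of_ae_mem_of_isBounded (isCompact_stdSimplex ℝ _).isBounded
    continuous_fst.aestronglyMeasurable ((ae_mem_XasSet hν).mono fun x hx => hx.2.2)

theorem integral_fst_mem_BasSet (hν : ν ∈ DasSet pbar c) : ∫ x, x.1 ∂ν ∈ BasSet pbar c := by
  have := hν.1
  have hmean := (convex_XasSet pbar).integral_mem (isClosed_XasSet pbar) (ae_mem_XasSet hν)
    ((integrable_fst_of_mem_DasSet hν).prodMk hν.2.2.1)
  rwa [integral_pair (integrable_fst_of_mem_DasSet hν) hν.2.2.1, hν.2.2.2,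
    mk_mem_XasSet_iff] at hmean

end AmbiguitySet

section ProductAmbiguitySet

variable {S Z : Type*} [Fintype S] [Fintype Z] {pbar c : S → (S × Z) → ℝ}

theorem dirac_mem_DaSet {p : S → (S × Z) → ℝ} (hp : ∀ s, p s ∈ BasSet (pbar s) (c s)) :
    Measure.dirac (fun s => (p s, c s)) ∈ DaSet pbar c :=
  ⟨fun s => Measure.dirac (p s, c s), fun s => dirac_mem_DasSet (hp s),
    (Measure.pi_dirac _).symm⟩

theorem exists_mem_BasSet_le_integral {μ : Measure (S → ((S × Z) → ℝ) × ((S × Z) → ℝ))}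
    (hμ : μ ∈ DaSet pbar c) {g : (S → (S × Z) → ℝ) → ℝ} (hgcv : ConvexOn ℝ univ g)
    (hgct : Continuous g) :
    ∃ q : S → (S × Z) → ℝ, (∀ s, q s ∈ BasSet (pbar s) (c s)) ∧
      g q ≤ ∫ x, g (fun s => (x s).1) ∂μ := by
  obtain ⟨ν, hν, rfl⟩ := hμ
  have := fun s => (hν s).1
  have hint : Integrable (fun x : S → _ => fun s => (x s).1) (Measure.pi ν) :=
    Integrable.of_eval fun s => integrable_comp_eval (integrable_fst_of_mem_DasSet (hν s))
  have hsimplex : ∀ᵐ x ∂Measure.pi ν, (fun s => (x s).1) ∈ univ.pi fun _ => stdSimplex ℝ _ :=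
    (eventually_all.2 fun s => Measure.tendsto_eval_ae_ae.eventually (ae_mem_XasSet (hν s))).mono
      fun _ hx s _ => (hx s).2.2
  have hgint : Integrable (fun x : S → _ => g fun s => (x s).1) (Measure.pi ν) :=
    .of_ae_mem_of_isBounded
      ((isCompact_univ_pi fun _ => isCompact_stdSimplex ℝ _).image hgct).isBounded
      (hgct.comp (by fun_prop)).aestronglyMeasurable
      (hsimplex.mono fun _ hx => mem_image_of_mem g hx)
  refine ⟨fun s => ∫ y, y.1 ∂ν s, fun s => integral_fst_mem_BasSet (hν s), ?_⟩
  have hjensen := hgcv.map_integral_le hgct.continuousOn isClosed_univ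
    (ae_of_all _ fun _ => mem_univ _) hint hgint
  rwa [integral_pi_comp_eval fun s => integrable_fst_of_mem_DasSet (hν s)] at hjensen

end ProductAmbiguitySet

theorem worst_case_dist_is_point_mass_general {S Z A : Type*} [Fintype S] [Fintype Z]
    (pbar c : A → S → (S × Z) → ℝ)
    (hpbar : ∀ a s, pbar a s ∈ stdSimplex ℝ (S × Z))
    (hc : ∀ a s i, 0 ≤ c a s i)
    (g : (S → (S × Z) → ℝ) → ℝ)
    (hgcv : ConvexOn ℝ Set.univ g) (hgct : Continuous g) (a : A) :
    (∃ pstar ∈ {p : S → (S × Z) → ℝ | ∀ s, p s ∈ BasSet (pbar a s) (c a s)},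
        ∀ p ∈ {p : S → (S × Z) → ℝ | ∀ s, p s ∈ BasSet (pbar a s) (c a s)}, g pstar ≤ g p) ∧
    (∀ pstar ∈ {p : S → (S × Z) → ℝ | ∀ s, p s ∈ BasSet (pbar a s) (c a s)},
      (∀ p ∈ {p : S → (S × Z) → ℝ | ∀ s, p s ∈ BasSet (pbar a s) (c a s)}, g pstar ≤ g p) →
        Measure.dirac (fun s => (pstar s, c a s)) ∈ DaSet (pbar a) (c a) ∧
        sInf ((fun μ => ∫ x, g (fun s => (x s).1) ∂μ) '' DaSet (pbar a) (c a)) = g pstar) := by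
  have hK : IsCompact {p : S → (S × Z) → ℝ | ∀ s, p s ∈ BasSet (pbar a s) (c a s)} := by
    simpa [Set.pi] using isCompact_univ_pi fun s => isCompact_BasSet (pbar a s) (c a s)
  have hpbar_mem : ∀ s, pbar a s ∈ BasSet (pbar a s) (c a s) :=
    fun s => ⟨hpbar a s, fun i => by simpa using hc a s i⟩
  obtain ⟨pmin, hpmin, hmin⟩ := hK.exists_isMinOn ⟨_, hpbar_mem⟩ hgct.continuousOn
  refine ⟨⟨pmin, hpmin, isMinOn_iff.1 hmin⟩, fun pstar hpstar hle => ?_⟩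
  have hdirac := dirac_mem_DaSet hpstar
  have hg_dirac := integral_dirac' _ (fun s => (pstar s, c a s))
    (hgct.comp (by fun_prop : Continuous fun x : S → _ => fun s => (x s).1)).stronglyMeasurable
  refine ⟨hdirac, IsLeast.csInf_eq ⟨⟨_, hdirac, hg_dirac⟩, ?_⟩⟩
  rintro _ ⟨μ, hμ, rfl⟩
  obtain ⟨q, hq, hgq⟩ := exists_mem_BasSet_le_integral hμ hgcv hgct
  exact (hle q hq).trans hgq

/-- For a convex continuous objective `g`, the worst case over the
mean-absolute-deviation ambiguity set `D̃_a` equals the minimum of `g` over the product of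
the box-constrained simplices `∏_s B_{as}`; the minimum is attained, and for any minimizer
`p*` the point mass at `((p*_s, c_{as}))_s` attains the infimum. -/
theorem worst_case_dist_is_point_mass {S Z A : Type*} [Fintype S] [Nonempty S]
    [Fintype Z] [Nonempty Z] [Fintype A] [Nonempty A]
    (pbar c : A → S → (S × Z) → ℝ)
    (hpbar : ∀ a s, pbar a s ∈ stdSimplex ℝ (S × Z))
    (hc : ∀ a s i, 0 ≤ c a s i)
    (g : (S → (S × Z) → ℝ) → ℝ)
    (hgcv : ConvexOn ℝ Set.univ g) (hgct : Continuous g) (a : A) :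
    (∃ pstar ∈ {p : S → (S × Z) → ℝ | ∀ s, p s ∈ BasSet (pbar a s) (c a s)},
        ∀ p ∈ {p : S → (S × Z) → ℝ | ∀ s, p s ∈ BasSet (pbar a s) (c a s)}, g pstar ≤ g p) ∧
    (∀ pstar ∈ {p : S → (S × Z) → ℝ | ∀ s, p s ∈ BasSet (pbar a s) (c a s)},
      (∀ p ∈ {p : S → (S × Z) → ℝ | ∀ s, p s ∈ BasSet (pbar a s) (c a s)}, g pstar ≤ g p) →
        Measure.dirac (fun s => (pstar s, c a s)) ∈ DaSet (pbar a) (c a) ∧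
        sInf ((fun μ => ∫ x, g (fun s => (x s).1) ∂μ) '' DaSet (pbar a) (c a)) = g pstar) :=
  worst_case_dist_is_point_mass_general pbar c hpbar hc g hgcv hgct a
end

section
/- Let V̄, V : Δ(S) → ℝ be bounded Borel functions, let b ∈ Δ(S), ε > 0, and t ∈ ℕ. Suppose for each a ∈ A, μ*_a ∈ D̃_a attains inf_{μ̃∈D̃_a} U_{V}(b,a,μ̃), and a* ∈ A attains max_{a∈A} U_{V̄}(b,a,μ*_a). Then (L V̄)(b) − (L V)(b) − ε β^{−t} ≤ β ∫ Σ_{z∈Z} n_z(b,p) [ V̄(f(b,p,z)) − V(f(b,p,z)) − ε β^{−(t+1)} ] dμ*_{a*}(p,u), where terms n_z(b,p)·V̄(f(b,p,z)) and n_z(b,p)·V(f(b,p,z)) are taken to be 0 whenever n_z(b,p) = 0. (This is the excess-uncertainty recursion justifying the forward exploration step of the heuristic search value iteration algorithm.) -/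
open MeasureTheory

/-!
Choosing the inner minimiser `μ*_{a*}` for both value functions at the maximising action `a*`
gives `(LV̄)(b) ≤ U_{V̄}(b,a*,μ*_{a*})` and `U_V(b,a*,μ*_{a*}) ≤ (LV)(b)`, so the left-hand side is
at most `β ∫ Σ_z (n_z V̄(f) − n_z V(f)) dμ*_{a*} − εβ^{−t}`. Since the sampled `p_s` lie in the
simplex almost surely, `Σ_z n_z(b,p) = 1` a.s., which turns `εβ^{−t}` into
`β ∫ Σ_z n_z(b,p) εβ^{−(t+1)} dμ*_{a*}`.
-/

section Belief

variable {S Z : Type*} [Fintype S] [Fintype Z] {b : S → ℝ} {p : S → (S × Z) → ℝ}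

lemma obsW_nonneg (hb : b ∈ stdSimplex ℝ S) (hp : ∀ s, p s ∈ stdSimplex ℝ (S × Z)) (z : Z) :
    0 ≤ obsW b p z :=
  Finset.sum_nonneg fun s _ => Finset.sum_nonneg fun _ _ => mul_nonneg ((hp s).1 _) (hb.1 s)

lemma sum_obsW_eq_one (hb : b ∈ stdSimplex ℝ S)
    (hp : ∀ s, p s ∈ stdSimplex ℝ (S × Z)) : ∑ z, obsW b p z = 1 :=
  calc ∑ z, obsW b p z = ∑ s, (∑ i, p s i) * b s := by
        simp only [obsW, Fintype.sum_prod_type, Finset.sum_mul]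
        rw [Finset.sum_comm]
        exact Finset.sum_congr rfl fun s _ => Finset.sum_comm
    _ = 1 := by simpa only [(hp _).2, one_mul] using hb.2

lemma bUpd_mem_stdSimplex (hb : b ∈ stdSimplex ℝ S) (hp : ∀ s, p s ∈ stdSimplex ℝ (S × Z))
    {z : Z} (hn : obsW b p z ≠ 0) : bUpd b p z ∈ stdSimplex ℝ S := by
  refine ⟨fun s' => div_nonneg (Finset.sum_nonneg fun s _ => mul_nonneg ((hp s).1 _) (hb.1 s))
    (obsW_nonneg hb hp z), ?_⟩
  simp only [bUpd, ← Finset.sum_div]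
  rw [Finset.sum_comm]
  exact div_self hn

lemma abs_bTerm_le {V : (S → ℝ) → ℝ} {M : ℝ} (hM : ∀ b' ∈ stdSimplex ℝ S, |V b'| ≤ M)
    (hb : b ∈ stdSimplex ℝ S) (hp : ∀ s, p s ∈ stdSimplex ℝ (S × Z)) (z : Z) :
    |bTerm V b p z| ≤ obsW b p z * M := by
  unfold bTerm
  split_ifs with hn
  · simp [hn]
  · rw [abs_mul, abs_of_nonneg (obsW_nonneg hb hp z)]
    exact mul_le_mul_of_nonneg_left (hM _ (bUpd_mem_stdSimplex hb hp hn)) (obsW_nonneg hb hp z)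

lemma abs_sum_bTerm_le {V : (S → ℝ) → ℝ} {M : ℝ}
    (hM : ∀ b' ∈ stdSimplex ℝ S, |V b'| ≤ M) (hb : b ∈ stdSimplex ℝ S)
    (hp : ∀ s, p s ∈ stdSimplex ℝ (S × Z)) : |∑ z, bTerm V b p z| ≤ M :=
  calc |∑ z, bTerm V b p z| ≤ ∑ z, obsW b p z * M :=
        (Finset.abs_sum_le_sum_abs _ _).trans (Finset.sum_le_sum fun z _ => abs_bTerm_le hM hb hp z)
    _ = M := by rw [← Finset.sum_mul, sum_obsW_eq_one hb hp, one_mul]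

end Belief

section Measurability

variable {S Z : Type*} [Fintype S]

lemma measurable_obsW (b : S → ℝ) (z : Z) :
    Measurable fun p : S → (S × Z) → ℝ => obsW b p z := by
  unfold obsW
  fun_prop

lemma measurable_bUpd (b : S → ℝ) (z : Z) :
    Measurable fun p : S → (S × Z) → ℝ => bUpd b p z := by
  unfold bUpd
  exact measurable_pi_lambda _ fun s' => (by fun_prop : Measurable _).div (measurable_obsW b z)

lemma measurable_bTerm {V : (S → ℝ) → ℝ} (hV : Measurable V) (b : S → ℝ) (z : Z) :
    Measurable fun p : S → (S × Z) → ℝ => bTerm V b p z :=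
  Measurable.ite (measurable_obsW b z (measurableSet_singleton 0)) measurable_const
    ((measurable_obsW b z).mul (hV.comp (measurable_bUpd b z)))

lemma measurableSet_XasSet [Fintype Z] (pbar : (S × Z) → ℝ) : MeasurableSet (XasSet pbar) := by
  have := (isClosed_stdSimplex ℝ (S × Z)).measurableSet
  exact measurableSet_setOfPred.2 (by fun_prop)

end Measurability

section AmbiguitySet

variable {S Z : Type*} [Fintype S] [Fintype Z] {pbar c : S → (S × Z) → ℝ}
  {μ : Measure (S → ((S × Z) → ℝ) × ((S × Z) → ℝ))}

lemma isProbabilityMeasure_of_mem_DaSet (hμ : μ ∈ DaSet pbar c) : IsProbabilityMeasure μ := by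
  obtain ⟨ν, hν, rfl⟩ := hμ
  have := fun s => (hν s).1
  infer_instance

lemma ae_mem_stdSimplex_of_mem_DaSet (hμ : μ ∈ DaSet pbar c) :
    ∀ᵐ x ∂μ, ∀ s, (x s).1 ∈ stdSimplex ℝ (S × Z) := by
  obtain ⟨ν, hν, rfl⟩ := hμ
  have := fun s => (hν s).1
  refine ae_all_iff.2 fun s => (Measure.tendsto_eval_ae_ae (i := s)).eventually
    (p := fun y : ((S × Z) → ℝ) × ((S × Z) → ℝ) => y.1 ∈ stdSimplex ℝ (S × Z)) ?_
  have hX : ∀ᵐ y ∂ν s, y ∈ XasSet (pbar s) :=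
    (ae_mem_iff_measure_eq (measurableSet_XasSet _).nullMeasurableSet).2
      (by rw [(hν s).2.1, measure_univ])
  exact hX.mono fun _ hy => hy.2.2

end AmbiguitySet

section Expectation

variable {S Z : Type*} [Fintype S] [Fintype Z] {b : S → ℝ} {V : (S → ℝ) → ℝ} {M : ℝ}
  {μ : Measure (S → ((S × Z) → ℝ) × ((S × Z) → ℝ))}

lemma integrable_sum_bTerm [IsFiniteMeasure μ] (hVm : Measurable V)
    (hM : ∀ b' ∈ stdSimplex ℝ S, |V b'| ≤ M) (hb : b ∈ stdSimplex ℝ S)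
    (hμ : ∀ᵐ x ∂μ, ∀ s, (x s).1 ∈ stdSimplex ℝ (S × Z)) :
    Integrable (fun x => ∑ z, bTerm V b (fun s => (x s).1) z) μ :=
  (integrable_const M).mono'
    (Finset.measurable_sum _ fun z _ => (measurable_bTerm hVm b z).comp (by fun_prop)).aestronglyMeasurable
    (hμ.mono fun _ hx =>
    (Real.norm_eq_abs _).trans_le (abs_sum_bTerm_le hM hb hx))

lemma abs_integral_sum_bTerm_le [IsProbabilityMeasure μ] (hM : ∀ b' ∈ stdSimplex ℝ S, |V b'| ≤ M)
    (hb : b ∈ stdSimplex ℝ S) (hμ : ∀ᵐ x ∂μ, ∀ s, (x s).1 ∈ stdSimplex ℝ (S × Z)) :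
    |∫ x, ∑ z, bTerm V b (fun s => (x s).1) z ∂μ| ≤ M := by
  simpa using norm_integral_le_of_norm_le_const (hμ.mono fun _ hx =>
    (Real.norm_eq_abs _).trans_le (abs_sum_bTerm_le hM hb hx))

lemma integral_sum_bTerm_sub_sub [IsProbabilityMeasure μ] {Vbar : (S → ℝ) → ℝ} {Mbar : ℝ}
    (hVbarm : Measurable Vbar) (hMbar : ∀ b' ∈ stdSimplex ℝ S, |Vbar b'| ≤ Mbar)
    (hVm : Measurable V) (hM : ∀ b' ∈ stdSimplex ℝ S, |V b'| ≤ M) (hb : b ∈ stdSimplex ℝ S)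
    (hμ : ∀ᵐ x ∂μ, ∀ s, (x s).1 ∈ stdSimplex ℝ (S × Z)) (k : ℝ) :
    ∫ x, ∑ z, (bTerm Vbar b (fun s => (x s).1) z - bTerm V b (fun s => (x s).1) z
        - obsW b (fun s => (x s).1) z * k) ∂μ =
      ∫ x, ∑ z, bTerm Vbar b (fun s => (x s).1) z ∂μ
        - ∫ x, ∑ z, bTerm V b (fun s => (x s).1) z ∂μ - k := by
  have hIbar := integrable_sum_bTerm hVbarm hMbar hb hμ
  have hI := integrable_sum_bTerm hVm hM hb hμ
  have hpointwise : ∀ᵐ x ∂μ, ∑ z, (bTerm Vbar b (fun s => (x s).1) z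
      - bTerm V b (fun s => (x s).1) z - obsW b (fun s => (x s).1) z * k) =
      ∑ z, bTerm Vbar b (fun s => (x s).1) z - ∑ z, bTerm V b (fun s => (x s).1) z - k :=
    hμ.mono fun x hx => by
      rw [Finset.sum_sub_distrib, Finset.sum_sub_distrib, ← Finset.sum_mul,
        sum_obsW_eq_one hb hx, one_mul]
  rw [integral_congr_ae hpointwise, integral_sub ?_ (integrable_const k),
    integral_sub hIbar hI, integral_const]
  · simp
  · exact hIbar.sub hI

lemma UVal_eq {A : Type*} (r : A → S → ℝ) (β : ℝ) (a : A) [IsProbabilityMeasure μ]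
    (hVm : Measurable V) (hM : ∀ b' ∈ stdSimplex ℝ S, |V b'| ≤ M) (hb : b ∈ stdSimplex ℝ S)
    (hμ : ∀ᵐ x ∂μ, ∀ s, (x s).1 ∈ stdSimplex ℝ (S × Z)) :
    UVal r β V b a μ = ∑ s, b s * r a s + β * ∫ x, ∑ z, bTerm V b (fun s => (x s).1) z ∂μ := by
  rw [UVal, integral_add (integrable_const _) ((integrable_sum_bTerm hVm hM hb hμ).const_mul β),
    integral_const, integral_const_mul]
  simp

end Expectation

section Bellman

variable {S Z A : Type*} [Fintype S] [Fintype Z] {pbar c : A → S → (S × Z) → ℝ}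
  {r : A → S → ℝ} {β : ℝ} {V : (S → ℝ) → ℝ} {b : S → ℝ}

lemma bddBelow_UVal_image {M : ℝ} (hVm : Measurable V) (hM : ∀ b' ∈ stdSimplex ℝ S, |V b'| ≤ M)
    (hb : b ∈ stdSimplex ℝ S) (a : A) :
    BddBelow ((fun μ => UVal r β V b a μ) '' DaSet (pbar a) (c a)) := by
  refine ⟨∑ s, b s * r a s - |β| * M, ?_⟩
  rintro _ ⟨μ, hμ, rfl⟩
  change _ ≤ UVal r β V b a μ
  have := isProbabilityMeasure_of_mem_DaSet hμ
  have hsimplex := ae_mem_stdSimplex_of_mem_DaSet hμ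
  have hneg := neg_abs_le (β * ∫ x, ∑ z, bTerm V b (fun s => (x s).1) z ∂μ)
  rw [abs_mul] at hneg
  rw [UVal_eq r β a hVm hM hb hsimplex]
  linarith [mul_le_mul_of_nonneg_left (abs_integral_sum_bTerm_le hM hb hsimplex) (abs_nonneg β)]

lemma Lop_le_of_forall_exists_UVal_le [Fintype A] [Nonempty A] {M : ℝ} (hVm : Measurable V)
    (hM : ∀ b' ∈ stdSimplex ℝ S, |V b'| ≤ M) (hb : b ∈ stdSimplex ℝ S) {u : ℝ}
    (h : ∀ a, ∃ μ ∈ DaSet (pbar a) (c a), UVal r β V b a μ ≤ u) : Lop pbar c r β V b ≤ u :=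
  ciSup_le fun a =>
    let ⟨μ, hμ, hle⟩ := h a
    (csInf_le (bddBelow_UVal_image hVm hM hb a) ⟨μ, hμ, rfl⟩).trans hle

lemma UVal_le_Lop_of_forall_le [Fintype A] {a : A} {μ : Measure (S → ((S × Z) → ℝ) × ((S × Z) → ℝ))}
    (hμ : μ ∈ DaSet (pbar a) (c a))
    (hmin : ∀ μ' ∈ DaSet (pbar a) (c a), UVal r β V b a μ ≤ UVal r β V b a μ') :
    UVal r β V b a μ ≤ Lop pbar c r β V b :=
  calc UVal r β V b a μ ≤ sInf ((fun μ => UVal r β V b a μ) '' DaSet (pbar a) (c a)) :=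
        le_csInf ⟨_, μ, hμ, rfl⟩ (Set.forall_mem_image.2 hmin)
    _ ≤ Lop pbar c r β V b :=
        le_ciSup (f := fun a => sInf ((fun μ => UVal r β V b a μ) '' DaSet (pbar a) (c a)))
          (Set.finite_range _).bddAbove a

end Bellman

theorem excess_uncertainty_recursion_general {S Z A : Type*} [Fintype S]
    [Fintype Z] [Fintype A]
    (pbar c : A → S → (S × Z) → ℝ)
    (r : A → S → ℝ) (β : ℝ) (hβ0 : 0 < β)
    (Vbar V : (S → ℝ) → ℝ) (hVbarm : Measurable Vbar) (hVm : Measurable V)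
    (hVbarb : ∃ M, ∀ b ∈ stdSimplex ℝ S, |Vbar b| ≤ M)
    (hVb : ∃ M, ∀ b ∈ stdSimplex ℝ S, |V b| ≤ M)
    (b : S → ℝ) (hb : b ∈ stdSimplex ℝ S) (ε : ℝ) (t : ℕ)
    (μstar : A → Measure (S → ((S × Z) → ℝ) × ((S × Z) → ℝ)))
    (hμmem : ∀ a, μstar a ∈ DaSet (pbar a) (c a))
    (hμmin : ∀ a, ∀ μ ∈ DaSet (pbar a) (c a), UVal r β V b a (μstar a) ≤ UVal r β V b a μ)
    (astar : A)
    (hamax : ∀ a, UVal r β Vbar b a (μstar a) ≤ UVal r β Vbar b astar (μstar astar)) :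
    Lop pbar c r β Vbar b - Lop pbar c r β V b - ε / β ^ t ≤
      β * ∫ x, ∑ z, (bTerm Vbar b (fun s => (x s).1) z - bTerm V b (fun s => (x s).1) z
          - obsW b (fun s => (x s).1) z * (ε / β ^ (t + 1))) ∂(μstar astar) := by
  obtain ⟨Mbar, hMbar⟩ := hVbarb
  obtain ⟨M, hM⟩ := hVb
  have : Nonempty A := ⟨astar⟩
  have := isProbabilityMeasure_of_mem_DaSet (hμmem astar)
  have hsimplex := ae_mem_stdSimplex_of_mem_DaSet (hμmem astar)
  have hLbar : Lop pbar c r β Vbar b ≤ UVal r β Vbar b astar (μstar astar) :=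
    Lop_le_of_forall_exists_UVal_le hVbarm hMbar hb fun a => ⟨μstar a, hμmem a, hamax a⟩
  have hL : UVal r β V b astar (μstar astar) ≤ Lop pbar c r β V b :=
    UVal_le_Lop_of_forall_le (hμmem astar) (hμmin astar)
  have hdiscount : β * (ε / β ^ (t + 1)) = ε / β ^ t := by
    rw [pow_succ]
    field_simp
  rw [UVal_eq r β astar hVbarm hMbar hb hsimplex] at hLbar
  rw [UVal_eq r β astar hVm hM hb hsimplex] at hL
  rw [integral_sum_bTerm_sub_sub hVbarm hMbar hVm hM hb hsimplex, mul_sub, mul_sub, hdiscount]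
  linarith

/-- the excess-uncertainty recursion.  If `μ*_a` attains
`inf_{μ̃∈D̃_a} U_V(b,a,μ̃)` for each `a` and `a*` attains `max_a U_V̄(b,a,μ*_a)`, then
`(LV̄)(b) − (LV)(b) − εβ^{−t} ≤ β ∫ Σ_z n_z(b,p) [V̄(f) − V(f) − εβ^{−(t+1)}] dμ*_{a*}`,
with the convention that the terms `n_z·V̄(f)`, `n_z·V(f)` vanish when `n_z(b,p) = 0`. -/
theorem excess_uncertainty_recursion {S Z A : Type*} [Fintype S] [Nonempty S]
    [Fintype Z] [Nonempty Z] [Fintype A] [Nonempty A]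
    (pbar c : A → S → (S × Z) → ℝ)
    (hpbar : ∀ a s, pbar a s ∈ stdSimplex ℝ (S × Z))
    (hc : ∀ a s i, 0 ≤ c a s i)
    (r : A → S → ℝ) (β : ℝ) (hβ0 : 0 < β) (hβ1 : β < 1)
    (Vbar V : (S → ℝ) → ℝ) (hVbarm : Measurable Vbar) (hVm : Measurable V)
    (hVbarb : ∃ M, ∀ b ∈ stdSimplex ℝ S, |Vbar b| ≤ M)
    (hVb : ∃ M, ∀ b ∈ stdSimplex ℝ S, |V b| ≤ M)
    (b : S → ℝ) (hb : b ∈ stdSimplex ℝ S) (ε : ℝ) (hε : 0 < ε) (t : ℕ)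
    (μstar : A → Measure (S → ((S × Z) → ℝ) × ((S × Z) → ℝ)))
    (hμmem : ∀ a, μstar a ∈ DaSet (pbar a) (c a))
    (hμmin : ∀ a, ∀ μ ∈ DaSet (pbar a) (c a), UVal r β V b a (μstar a) ≤ UVal r β V b a μ)
    (astar : A)
    (hamax : ∀ a, UVal r β Vbar b a (μstar a) ≤ UVal r β Vbar b astar (μstar astar)) :
    Lop pbar c r β Vbar b - Lop pbar c r β V b - ε / β ^ t ≤
      β * ∫ x, ∑ z, (bTerm Vbar b (fun s => (x s).1) z - bTerm V b (fun s => (x s).1) z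
          - obsW b (fun s => (x s).1) z * (ε / β ^ (t + 1))) ∂(μstar astar) :=
  excess_uncertainty_recursion_general pbar c r β hβ0 Vbar V hVbarm hVm hVbarb hVb b hb ε t μstar
    hμmem hμmin astar hamax
end
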